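/- Let G = ⟨⟨a₁, a₃⟩⟩ with the recursive generators above, H₁ and H₃ the normal closures in G of ⟨⟨a₁⟩⟩ and ⟨⟨a₃⟩⟩ respectively, and U = ⟨⟨γ₁,γ₂⟩⟩ as above. Then H₁ ∩ H₃ = {(x, x⁻¹) : x ∈ U}, and the projection to the second coordinate gives an isomorphism H₁ ∩ H₃ ≅ U. -/

import Mathlib

open Equiv

/-- Vertices of the infinite rooted binary tree: finite words over `Bool`.
The parent of a nonempty word is `dropLast`. -/
abbrev Wd := List Bool

/-- The group `Ω = Aut(T)` of automorphisms of the infinite rooted binary tree,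
realized as the subgroup of permutations of the vertex set preserving length
(levels) and the parent relation. -/
def OmegaSG : Subgroup (Equiv.Perm Wd) where
  carrier := {σ | (∀ w, (σ w).length = w.length) ∧ ∀ w, (σ w).dropLast = σ w.dropLast}
  one_mem' := ⟨fun _ => rfl, fun _ => rfl⟩
  mul_mem' := by
    rintro σ τ ⟨hσl, hσd⟩ ⟨hτl, hτd⟩
    refine ⟨fun w => ?_, fun w => ?_⟩
    · simp [Equiv.Perm.mul_apply, hσl, hτl]
    · simp [Equiv.Perm.mul_apply, hσd, hτd]
  inv_mem' := by
    rintro σ ⟨hl, hd⟩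
    refine ⟨fun w => ?_, fun w => ?_⟩
    · have := hl (σ⁻¹ w)
      rw [show σ (σ⁻¹ w) = w from σ.apply_symm_apply w] at this
      exact this.symm
    · apply σ.injective
      have := hd (σ⁻¹ w)
      rw [show σ (σ⁻¹ w) = w from σ.apply_symm_apply w] at this
      rw [← this]
      simp

/-- The section pairing: `(u,v)` acts as `u` on the subtree rooted at `false`
and as `v` on the subtree rooted at `true`. -/
def pairFun (f g : Wd → Wd) : Wd → Wd
  | [] => []
  | false :: w => false :: f w
  | true :: w => true :: g w

@[simp] lemma pairFun_nil (f g : Wd → Wd) : pairFun f g [] = [] := rfl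
@[simp] lemma pairFun_false (f g : Wd → Wd) (w : Wd) :
    pairFun f g (false :: w) = false :: f w := rfl
@[simp] lemma pairFun_true (f g : Wd → Wd) (w : Wd) :
    pairFun f g (true :: w) = true :: g w := rfl

lemma pairFun_comp (f g f' g' : Wd → Wd) (hf : ∀ w, f (f' w) = w) (hg : ∀ w, g (g' w) = w) :
    ∀ w, pairFun f g (pairFun f' g' w) = w := by
  rintro (_ | ⟨(_|_), w⟩) <;> simp [hf, hg]

/-- The permutation `(u,v)` of the tree. -/
def pairPerm (u v : Equiv.Perm Wd) : Equiv.Perm Wd where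
  toFun := pairFun u v
  invFun := pairFun u.symm v.symm
  left_inv := pairFun_comp _ _ _ _ (fun w => u.symm_apply_apply w) (fun w => v.symm_apply_apply w)
  right_inv := pairFun_comp _ _ _ _ (fun w => u.apply_symm_apply w) (fun w => v.apply_symm_apply w)

@[simp] lemma pairPerm_apply (u v : Equiv.Perm Wd) (w : Wd) :
    pairPerm u v w = pairFun u v w := rfl

/-- The first-level swap `σ`. -/
def swapPerm : Equiv.Perm Wd where
  toFun w := match w with | [] => [] | b :: w => (!b) :: w
  invFun w := match w with | [] => [] | b :: w => (!b) :: w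
  left_inv := by rintro (_ | ⟨b, w⟩) <;> simp
  right_inv := by rintro (_ | ⟨b, w⟩) <;> simp

@[simp] lemma swapPerm_nil : swapPerm [] = [] := rfl
@[simp] lemma swapPerm_cons (b : Bool) (w : Wd) : swapPerm (b :: w) = (!b) :: w := rfl

lemma swapPerm_mem : swapPerm ∈ OmegaSG := by
  constructor
  · rintro (_ | ⟨b, w⟩) <;> simp
  · rintro (_ | ⟨b, w⟩)
    · simp
    · rcases eq_or_ne w [] with rfl | hw
      · simp
      · simp only [swapPerm_cons, List.dropLast_cons_of_ne_nil hw]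

lemma mem_omega_length {u : Equiv.Perm Wd} (hu : u ∈ OmegaSG) (w : Wd) :
    (u w).length = w.length := hu.1 w

lemma mem_omega_ne_nil {u : Equiv.Perm Wd} (hu : u ∈ OmegaSG) {w : Wd} (hw : w ≠ []) :
    u w ≠ [] := by
  intro h
  exact hw (List.eq_nil_of_length_eq_zero (by rw [← hu.1 w, h]; rfl))

lemma mem_omega_nil {u : Equiv.Perm Wd} (hu : u ∈ OmegaSG) : u [] = [] :=
  List.eq_nil_of_length_eq_zero (hu.1 [])

lemma pairPerm_mem {u v : Equiv.Perm Wd} (hu : u ∈ OmegaSG) (hv : v ∈ OmegaSG) :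
    pairPerm u v ∈ OmegaSG := by
  constructor
  · rintro (_ | ⟨(_|_), w⟩) <;> simp [hu.1, hv.1]
  · rintro (_ | ⟨(_|_), w⟩)
    · simp
    · rcases eq_or_ne w [] with rfl | hw
      · simp [mem_omega_nil hu]
      · simp only [pairPerm_apply, pairFun_false, List.dropLast_cons_of_ne_nil hw,
          List.dropLast_cons_of_ne_nil (mem_omega_ne_nil hu hw)]
        rw [hu.2]
    · rcases eq_or_ne w [] with rfl | hw
      · simp [mem_omega_nil hv]
      · simp only [pairPerm_apply, pairFun_true, List.dropLast_cons_of_ne_nil hw,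
          List.dropLast_cons_of_ne_nil (mem_omega_ne_nil hv hw)]
        rw [hv.2]

/-- `(u,v)` as an element of `Ω`. -/
def pairOm (u v : OmegaSG) : OmegaSG := ⟨pairPerm u.1 v.1, pairPerm_mem u.2 v.2⟩

/-- `σ` as an element of `Ω`. -/
def swapOm : OmegaSG := ⟨swapPerm, swapPerm_mem⟩

/-! ### Levels, restriction, sign, odometers -/

/-- Level `n` of the tree: words of length `n`. -/
abbrev Lv (n : ℕ) := {w : Wd // w.length = n}

instance fintypeLv (n : ℕ) : Fintype (Lv n) := by
  apply Fintype.ofSurjective (fun g : Fin n → Bool => (⟨List.ofFn g, List.length_ofFn (f := g)⟩ : Lv n))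
  rintro ⟨w, rfl⟩
  exact ⟨w.get, Subtype.ext (List.ofFn_get w)⟩

/-- The permutation induced by `g ∈ Ω` on level `n`. -/
def levelPerm (n : ℕ) (g : OmegaSG) : Equiv.Perm (Lv n) where
  toFun w := ⟨g.1 w.1, by rw [mem_omega_length g.2, w.2]⟩
  invFun w := ⟨(g⁻¹ : OmegaSG).1 w.1, by rw [mem_omega_length (g⁻¹ : OmegaSG).2, w.2]⟩
  left_inv w := Subtype.ext (by simp)
  right_inv w := Subtype.ext (by simp)

/-- Restriction to level `n` as a group homomorphism. -/
def levelHom (n : ℕ) : OmegaSG →* Equiv.Perm (Lv n) where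
  toFun := levelPerm n
  map_one' := Equiv.ext fun w => Subtype.ext rfl
  map_mul' g h := Equiv.ext fun w => Subtype.ext rfl

/-- `sgn_n`: the sign of the permutation induced on level `n`. -/
noncomputable def sgn (n : ℕ) (g : OmegaSG) : ℤˣ := Equiv.Perm.sign (levelPerm n g)

/-- An odometer: an element acting transitively on every level of the tree. -/
def IsOdometer (g : OmegaSG) : Prop :=
  ∀ n : ℕ, ∀ v w : Lv n, ∃ k : ℤ, ((g ^ k : OmegaSG) : Equiv.Perm Wd) v.1 = w.1

/-! ### The profinite topology on `Aut(T)` -/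

instance : TopologicalSpace Wd := ⊥
instance : DiscreteTopology Wd := ⟨rfl⟩
instance : TopologicalSpace (Equiv.Perm Wd) :=
  TopologicalSpace.induced (fun g => (g : Wd → Wd)) Pi.topologicalSpace

lemma continuous_permCoe : Continuous (fun g : Equiv.Perm Wd => (g : Wd → Wd)) :=
  continuous_induced_dom

lemma continuous_permApply (w : Wd) : Continuous fun g : Equiv.Perm Wd => g w :=
  (continuous_apply w).comp continuous_permCoe

instance : IsTopologicalGroup (Equiv.Perm Wd) where
  continuous_mul := by
    apply continuous_induced_rng.2
    apply continuous_pi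
    intro w
    rw [continuous_discrete_rng]
    intro y
    have h : (fun p : Equiv.Perm Wd × Equiv.Perm Wd => ((p.1 * p.2 : Equiv.Perm Wd) : Wd → Wd) w) ⁻¹' {y}
        = ⋃ x : Wd, {p : Equiv.Perm Wd × Equiv.Perm Wd | p.2 w = x} ∩ {p | p.1 x = y} := by
      ext p
      simp only [Set.mem_preimage, Set.mem_singleton_iff, Set.mem_iUnion, Set.mem_inter_iff,
        Set.mem_setOf_eq, Equiv.Perm.mul_apply]
      constructor
      · intro hh; exact ⟨p.2 w, rfl, hh⟩
      · rintro ⟨x, rfl, hh⟩; exact hh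
    show IsOpen ((fun p : Equiv.Perm Wd × Equiv.Perm Wd =>
      ((p.1 * p.2 : Equiv.Perm Wd) : Wd → Wd) w) ⁻¹' {y})
    rw [h]
    refine isOpen_iUnion fun x => IsOpen.inter ?_ ?_
    · exact IsOpen.preimage ((continuous_permApply w).comp continuous_snd) (isOpen_discrete {x})
    · exact IsOpen.preimage ((continuous_permApply x).comp continuous_fst) (isOpen_discrete {y})
  continuous_inv := by
    apply continuous_induced_rng.2
    apply continuous_pi
    intro w
    rw [continuous_discrete_rng]
    intro y
    have h : (fun g : Equiv.Perm Wd => ((g⁻¹ : Equiv.Perm Wd) : Wd → Wd) w) ⁻¹' {y}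
        = {g : Equiv.Perm Wd | g y = w} := by
      ext g
      simp only [Set.mem_preimage, Set.mem_singleton_iff, Set.mem_setOf_eq]
      constructor
      · rintro rfl; simp
      · intro hh; rw [← hh]; simp
    show IsOpen ((fun g : Equiv.Perm Wd => ((g⁻¹ : Equiv.Perm Wd) : Wd → Wd) w) ⁻¹' {y})
    rw [h]
    exact IsOpen.preimage (continuous_permApply y) (isOpen_discrete {w})

/-! ### The recursive generators `a₁ = σ`, `a₂ = (a₃⁻¹, a₂⁻¹)σ`, `a₃ = (a₂, a₃)` -/

mutual
  /-- The underlying function of `a₂`. -/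
  def pA : Wd → Wd
    | [] => []
    | false :: w => true :: piA w
    | true :: w => false :: qiA w
  /-- The underlying function of `a₃`. -/
  def qA : Wd → Wd
    | [] => []
    | false :: w => false :: pA w
    | true :: w => true :: qA w
  /-- The underlying function of `a₂⁻¹`. -/
  def piA : Wd → Wd
    | [] => []
    | false :: w => true :: qA w
    | true :: w => false :: pA w
  /-- The underlying function of `a₃⁻¹`. -/
  def qiA : Wd → Wd
    | [] => []
    | false :: w => false :: piA w
    | true :: w => true :: qiA w
end

lemma a_inv_lemma : ∀ w : Wd, pA (piA w) = w ∧ piA (pA w) = w ∧ qA (qiA w) = w ∧ qiA (qA w) = w := by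
  intro w
  induction w with
  | nil => simp [pA, qA, piA, qiA]
  | cons b w ih =>
    cases b <;>
      simp [pA, qA, piA, qiA, ih.1, ih.2.1, ih.2.2.1, ih.2.2.2]

/-- The generator `a₂`. -/
def a2 : Equiv.Perm Wd where
  toFun := pA
  invFun := piA
  left_inv w := (a_inv_lemma w).2.1
  right_inv w := (a_inv_lemma w).1

/-- The generator `a₃`. -/
def a3 : Equiv.Perm Wd where
  toFun := qA
  invFun := qiA
  left_inv w := (a_inv_lemma w).2.2.2
  right_inv w := (a_inv_lemma w).2.2.1

lemma a_length_lemma : ∀ w : Wd, (pA w).length = w.length ∧ (qA w).length = w.length ∧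
    (piA w).length = w.length ∧ (qiA w).length = w.length := by
  intro w
  induction w with
  | nil => simp [pA, qA, piA, qiA]
  | cons b w ih =>
    cases b <;>
      simp [pA, qA, piA, qiA, ih.1, ih.2.1, ih.2.2.1, ih.2.2.2]

lemma a_ne_nil {f : Wd → Wd} (hf : ∀ w : Wd, (f w).length = w.length) {w : Wd} (hw : w ≠ []) :
    f w ≠ [] := by
  intro h
  exact hw (List.eq_nil_of_length_eq_zero (by rw [← hf w, h]; rfl))

lemma a_dropLast_lemma : ∀ w : Wd, (pA w).dropLast = pA w.dropLast ∧
    (qA w).dropLast = qA w.dropLast ∧ (piA w).dropLast = piA w.dropLast ∧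
    (qiA w).dropLast = qiA w.dropLast := by
  intro w
  induction w with
  | nil => simp [pA, qA, piA, qiA]
  | cons b w ih =>
    rcases eq_or_ne w [] with rfl | hw
    · cases b <;> simp [pA, qA, piA, qiA]
    · have hp := a_ne_nil (fun w => (a_length_lemma w).1) hw
      have hq := a_ne_nil (fun w => (a_length_lemma w).2.1) hw
      have hpi := a_ne_nil (fun w => (a_length_lemma w).2.2.1) hw
      have hqi := a_ne_nil (fun w => (a_length_lemma w).2.2.2) hw
      cases b <;>
        simp [pA, qA, piA, qiA, List.dropLast_cons_of_ne_nil hw,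
          List.dropLast_cons_of_ne_nil hp, List.dropLast_cons_of_ne_nil hq,
          List.dropLast_cons_of_ne_nil hpi, List.dropLast_cons_of_ne_nil hqi,
          ih.1, ih.2.1, ih.2.2.1, ih.2.2.2]

lemma a2_mem : a2 ∈ OmegaSG :=
  ⟨fun w => (a_length_lemma w).1, fun w => (a_dropLast_lemma w).1⟩

lemma a3_mem : a3 ∈ OmegaSG :=
  ⟨fun w => (a_length_lemma w).2.1, fun w => (a_dropLast_lemma w).2.1⟩

/-- `a₁ = σ` as an element of `Ω`. -/
def A1 : OmegaSG := swapOm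
/-- `a₂` as an element of `Ω`. -/
def A2 : OmegaSG := ⟨a2, a2_mem⟩
/-- `a₃` as an element of `Ω`. -/
def A3 : OmegaSG := ⟨a3, a3_mem⟩

/-- `G = ⟨⟨a₁, a₃⟩⟩`, the topological closure of the subgroup generated by `a₁` and `a₃`:
a model of the geometric iterated monodromy group of `f(x) = 2/(x-1)²`. -/
noncomputable def Ggrp : Subgroup OmegaSG :=
  (Subgroup.closure {A1, A3}).topologicalClosure

/-- The normal closure in `G` of the closed subgroup generated by an element `c`:
the closed subgroup generated by all `G`-conjugates of `c`. -/
noncomputable def nclG (c : OmegaSG) : Subgroup OmegaSG :=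
  (Subgroup.closure {x | ∃ g ∈ Ggrp, x = g * c * g⁻¹}).topologicalClosure

/-- `U`, the normal closure in `G` of `⟨⟨a₂a₃⁻¹⟩⟩`. -/
noncomputable def Ugrp : Subgroup OmegaSG := nclG (A2 * A3⁻¹)

/-- `H₁`, the normal closure in `G` of `⟨⟨a₁⟩⟩`. -/
noncomputable def H1grp : Subgroup OmegaSG := nclG A1

/-- `H₃`, the normal closure in `G` of `⟨⟨a₃⟩⟩`. -/
noncomputable def H3grp : Subgroup OmegaSG := nclG A3

/-!
The closed normal closure `N` of `β₁ = [a₁, a₃]` in `G` contains every commutator of `G`, since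
the two generators commute modulo `N`. A conjugate of `a₁` is `a₁` times a commutator, so
`H₁ ⊆ N ∪ a₁N`; the sign of the action on the first level is trivial on `H₃` and on `N` but not
on `a₁`, hence `H₁ ∩ H₃ = N`.

On the other side, the recursions give `β₁ = (γ₁⁻¹, γ₁)`, `β₂ = (γ₂⁻¹, γ₂)` and `γ₁γ₂ = γ₂γ₁`, and
`U` is the closure of `⟨γ₁, γ₂⟩`, so `U` is abelian and `y ↦ (y⁻¹, y)` is an injective
homomorphism on `U`. Its image is closed because `U` is compact, and is normalized by `G`:
conjugation by `a₃ = (a₂, a₃)` acts on both coordinates as conjugation by `a₂`, because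
`a₃ = a₂γ₂⁻¹` and `γ₂` is central in `U`. So the image contains `N`; conversely it lies in `N`,
since the elements of `U` sent into `N` form a closed subgroup containing `γ₁` and `γ₂`.
-/
open scoped commutatorElement

theorem pow_three_eq_inv_of_pow_four {G : Type*} [Group G] {g : G} (h : g ^ 4 = 1) :
    g ^ 3 = g⁻¹ :=
  eq_inv_of_mul_eq_one_left (by rw [← pow_succ, h])

theorem inv_sq_eq_sq_of_pow_four {G : Type*} [Group G] {g : G} (h : g ^ 4 = 1) :
    g⁻¹ ^ 2 = g ^ 2 := by
  rw [inv_pow, inv_eq_iff_mul_eq_one, ← pow_add, h]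

namespace Subgroup

variable {G : Type*} [Group G]

theorem mem_normalizer_of_conj_mem_of_inv_conj_mem {H : Subgroup G} {g : G}
    (h₁ : ∀ x ∈ H, g * x * g⁻¹ ∈ H) (h₂ : ∀ x ∈ H, g⁻¹ * x * g ∈ H) : g ∈ normalizer (H : Set G) :=
  mem_normalizer_iff.2 fun x => ⟨h₁ x, fun hx => by simpa [mul_assoc] using h₂ _ hx⟩

theorem mem_normalizer_of_isOfFinOrder {H : Subgroup G} {g : G} (hg : IsOfFinOrder g)
    (h : ∀ x ∈ H, g * x * g⁻¹ ∈ H) : g ∈ normalizer (H : Set G) := by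
  have hpow : ∀ n : ℕ, ∀ x ∈ H, g ^ n * x * (g ^ n)⁻¹ ∈ H := by
    intro n
    induction n with
    | zero => simp
    | succ n ih =>
      intro x hx
      simpa only [pow_succ', mul_inv_rev, mul_assoc] using h _ (ih x hx)
  obtain ⟨n, hn⟩ := hg.mem_powers_iff_mem_zpowers.2 (inv_mem (mem_zpowers g))
  refine mem_normalizer_of_conj_mem_of_inv_conj_mem h fun x hx => ?_
  simpa only [hn, inv_inv] using hpow n x hx

variable [TopologicalSpace G] [IsTopologicalGroup G]

theorem isClosed_normalizer {H : Subgroup G} (hH : IsClosed (H : Set G)) :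
    IsClosed (normalizer (H : Set G) : Set G) := by
  have : (normalizer (H : Set G) : Set G) =
      (⋂ x ∈ H, (fun g => g * x * g⁻¹) ⁻¹' H) ∩ ⋂ x ∈ H, (fun g => g⁻¹ * x * g) ⁻¹' H := by
    ext g
    simp only [SetLike.mem_coe, Set.mem_inter_iff, Set.mem_iInter, Set.mem_preimage]
    refine ⟨fun hg => ⟨fun x hx => (mem_normalizer_iff.1 hg x).1 hx, fun x hx => ?_⟩,
      fun hg => mem_normalizer_of_conj_mem_of_inv_conj_mem hg.1 hg.2⟩
    exact (mem_normalizer_iff''.1 hg x).1 hx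
  rw [this]
  exact (isClosed_biInter fun x _ => hH.preimage (by fun_prop)).inter
    (isClosed_biInter fun x _ => hH.preimage (by fun_prop))

theorem conj_mem_topologicalClosure_closure {S : Set G} {c : G}
    (hS : ∀ s ∈ S, c * s * c⁻¹ ∈ closure S) {x : G} (hx : x ∈ (closure S).topologicalClosure) :
    c * x * c⁻¹ ∈ (closure S).topologicalClosure := by
  let K := (closure S).topologicalClosure.comap (MulAut.conj c).toMonoidHom
  have hK : IsClosed (K : Set G) :=
    (isClosed_topologicalClosure _).preimage (show Continuous fun y => c * y * c⁻¹ by fun_prop)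
  have hSK : closure S ≤ K := (closure_le K).2 fun s hs => le_topologicalClosure _ (hS s hs)
  exact topologicalClosure_minimal _ hSK hK hx

theorem le_normalizer_topologicalClosure_closure {L : Subgroup G} {S : Set G}
    (hS : ∀ g ∈ L, ∀ s ∈ S, g * s * g⁻¹ ∈ S) :
    L ≤ normalizer ((closure S).topologicalClosure : Set G) :=
  fun g hg => mem_normalizer_of_conj_mem_of_inv_conj_mem
    (fun _ => conj_mem_topologicalClosure_closure fun s hs => subset_closure (hS g hg s hs))
    (fun _ hx => by
      simpa only [inv_inv] using conj_mem_topologicalClosure_closure (c := g⁻¹)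
        (fun s hs => subset_closure (hS _ (inv_mem hg) s hs)) hx)

def centralizerModulo (N : Subgroup G) (x : G) : Subgroup G where
  carrier := {g | g ∈ normalizer (N : Set G) ∧ ⁅g, x⁆ ∈ N}
  one_mem' := ⟨one_mem _, by simp⟩
  mul_mem' := by
    rintro g k ⟨hg, hgx⟩ ⟨hk, hkx⟩
    refine ⟨mul_mem hg hk, ?_⟩
    have h : ⁅g * k, x⁆ = g * ⁅k, x⁆ * g⁻¹ * ⁅g, x⁆ := by simp only [commutatorElement_def]; group
    rw [h]
    exact mul_mem ((mem_normalizer_iff.1 hg _).1 hkx) hgx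
  inv_mem' := by
    rintro g ⟨hg, hgx⟩
    refine ⟨inv_mem hg, ?_⟩
    rw [commutatorElement_inv_left, ← commutatorElement_inv]
    exact (mem_normalizer_iff''.1 hg _).1 (inv_mem hgx)

theorem isClosed_centralizerModulo {N : Subgroup G} (hN : IsClosed (N : Set G)) (x : G) :
    IsClosed (centralizerModulo N x : Set G) :=
  (isClosed_normalizer hN).inter (hN.preimage (show Continuous fun g => ⁅g, x⁆ by
    simp only [commutatorElement_def]; fun_prop))

theorem commutatorElement_mem_of_mem_topologicalClosure_closure_pair {N : Subgroup G}
    (hN : IsClosed (N : Set G)) {a b : G} (ha : a ∈ normalizer (N : Set G))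
    (hb : b ∈ normalizer (N : Set G)) (hab : ⁅a, b⁆ ∈ N) {g h : G}
    (hg : g ∈ (closure {a, b}).topologicalClosure) (hh : h ∈ (closure {a, b}).topologicalClosure) :
    ⁅g, h⁆ ∈ N := by
  have hsymm : ∀ {x y : G}, ⁅x, y⁆ ∈ N → ⁅y, x⁆ ∈ N := fun h => by
    rw [← commutatorElement_inv]; exact inv_mem h
  have key : ∀ x, ⁅a, x⁆ ∈ N → ⁅b, x⁆ ∈ N →
      (closure {a, b}).topologicalClosure ≤ centralizerModulo N x := fun x hax hbx =>
    topologicalClosure_minimal _ ((closure_le _).2 (Set.insert_subset ⟨ha, hax⟩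
      (Set.singleton_subset_iff.2 ⟨hb, hbx⟩))) (isClosed_centralizerModulo hN x)
  have hah : ⁅a, h⁆ ∈ N := hsymm (key a (by simp) (hsymm hab) hh).2
  have hbh : ⁅b, h⁆ ∈ N := hsymm (key b hab (by simp) hh).2
  exact (key h hah hbh hg).2

def unionCoset (N : Subgroup G) {a : G} (ha : a ∈ normalizer (N : Set G)) (ha2 : a * a ∈ N) :
    Subgroup G where
  carrier := {x | x ∈ N ∨ a * x ∈ N}
  one_mem' := Or.inl (one_mem N)
  mul_mem' := by
    have ha' := inv_mem ha
    rintro x y (hx | hx) (hy | hy)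
    · exact Or.inl (mul_mem hx hy)
    · refine Or.inr ?_
      rw [show a * (x * y) = a * x * a⁻¹ * (a * y) by group]
      exact mul_mem ((mem_normalizer_iff.1 ha x).1 hx) hy
    · exact Or.inr (by rw [← mul_assoc]; exact mul_mem hx hy)
    · refine Or.inl ?_
      rw [show x * y = a⁻¹ * (a * x) * a⁻¹⁻¹ * (a * a)⁻¹ * (a * y) by group]
      exact mul_mem (mul_mem ((mem_normalizer_iff.1 ha' _).1 hx) (inv_mem ha2)) hy
  inv_mem' := by
    rintro x (hx | hx)
    · exact Or.inl (inv_mem hx)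
    · refine Or.inr ?_
      rw [show a * x⁻¹ = a * (a * x)⁻¹ * a⁻¹ * (a * a) by group]
      exact mul_mem ((mem_normalizer_iff.1 ha _).1 (inv_mem hx)) ha2

theorem isClosed_unionCoset {N : Subgroup G} (hN : IsClosed (N : Set G)) {a : G}
    (ha : a ∈ normalizer (N : Set G)) (ha2 : a * a ∈ N) :
    IsClosed (unionCoset N ha ha2 : Set G) :=
  hN.union (hN.preimage (continuous_const_mul a))

end Subgroup

theorem omegaSG_ext {u v : OmegaSG} (h : ∀ w, (u : Perm Wd) w = (v : Perm Wd) w) : u = v :=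
  Subtype.ext (Equiv.ext h)

theorem pairOm_mul (u v u' v' : OmegaSG) :
    pairOm u v * pairOm u' v' = pairOm (u * u') (v * v') :=
  omegaSG_ext <| by rintro (_ | ⟨(_ | _), w⟩) <;> rfl

theorem pairOm_one : pairOm 1 1 = 1 :=
  omegaSG_ext <| by rintro (_ | ⟨(_ | _), w⟩) <;> rfl

theorem pairOm_inv (u v : OmegaSG) : (pairOm u v)⁻¹ = pairOm u⁻¹ v⁻¹ := by
  rw [inv_eq_iff_mul_eq_one, pairOm_mul, mul_inv_cancel, mul_inv_cancel, pairOm_one]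

theorem pairOm_pow (u v : OmegaSG) (n : ℕ) : pairOm u v ^ n = pairOm (u ^ n) (v ^ n) := by
  induction n with
  | zero => exact pairOm_one.symm
  | succ n ih => rw [pow_succ, ih, pairOm_mul, pow_succ, pow_succ]

theorem pairOm_inj {u v u' v' : OmegaSG} : pairOm u v = pairOm u' v' ↔ u = u' ∧ v = v' := by
  refine ⟨fun h => ⟨omegaSG_ext fun w => ?_, omegaSG_ext fun w => ?_⟩,
    fun ⟨hu, hv⟩ => hu ▸ hv ▸ rfl⟩
  · simpa [pairOm, pairPerm] using congrArg (fun g : OmegaSG => (g : Perm Wd) (false :: w)) h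
  · simpa [pairOm, pairPerm] using congrArg (fun g : OmegaSG => (g : Perm Wd) (true :: w)) h

theorem A1_mul_pairOm (u v : OmegaSG) : A1 * pairOm u v = pairOm v u * A1 :=
  omegaSG_ext <| by rintro (_ | ⟨(_ | _), w⟩) <;> rfl

theorem A1_mul_self : A1 * A1 = 1 :=
  omegaSG_ext <| by rintro (_ | ⟨(_ | _), w⟩) <;> rfl

theorem A1_inv : A1⁻¹ = A1 :=
  inv_eq_of_mul_eq_one_right A1_mul_self

theorem A1_mul_pairOm_mul_A1 (u v : OmegaSG) : A1 * pairOm u v * A1 = pairOm v u := by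
  rw [A1_mul_pairOm, mul_assoc, A1_mul_self, mul_one]

theorem pairOm_mul_A1_mul_pairOm_mul_A1 (a b c d : OmegaSG) :
    pairOm a b * A1 * (pairOm c d * A1) = pairOm (a * d) (b * c) := by
  rw [mul_assoc, ← mul_assoc A1, A1_mul_pairOm_mul_A1, pairOm_mul]

theorem eq_one_of_eq_pairOm_one {g : OmegaSG} (h : g = pairOm 1 g) : g = 1 := by
  refine omegaSG_ext fun w => ?_
  induction w with
  | nil => exact mem_omega_nil g.2
  | cons b w ih =>
    rw [h]
    cases b
    · rfl
    · exact congrArg (true :: ·) ih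

theorem A3_eq_pairOm : A3 = pairOm A2 A3 :=
  omegaSG_ext <| by rintro (_ | ⟨(_ | _), w⟩) <;> rfl

theorem A2_eq_pairOm : A2 = pairOm A3⁻¹ A2⁻¹ * A1 :=
  omegaSG_ext <| by rintro (_ | ⟨(_ | _), w⟩) <;> rfl

theorem A3_inv_eq_pairOm : A3⁻¹ = pairOm A2⁻¹ A3⁻¹ := by
  rw [← pairOm_inv, ← A3_eq_pairOm]

theorem A2_mul_A3 : A2 * A3 = A1 :=
  calc A2 * A3 = pairOm A3⁻¹ A2⁻¹ * A1 * pairOm A2 A3 := by rw [← A2_eq_pairOm, ← A3_eq_pairOm]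
    _ = pairOm (A3⁻¹ * A3) (A2⁻¹ * A2) * A1 := by
      rw [mul_assoc, A1_mul_pairOm, ← mul_assoc, pairOm_mul]
    _ = A1 := by rw [inv_mul_cancel, inv_mul_cancel, pairOm_one, one_mul]

theorem A2_eq_A1_mul_A3_inv : A2 = A1 * A3⁻¹ := by
  rw [← A2_mul_A3, mul_inv_cancel_right]

theorem A3_inv_mul_A2_inv : A3⁻¹ * A2⁻¹ = A2 * A3 := by
  rw [← mul_inv_rev, A2_mul_A3, A1_inv]

theorem A3_mul_A2_mul_self : A3 * A2 * (A3 * A2) = 1 := by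
  rw [A2_eq_A1_mul_A3_inv,
    show A3 * (A1 * A3⁻¹) * (A3 * (A1 * A3⁻¹)) = A3 * (A1 * A1) * A3⁻¹ by group,
    A1_mul_self, mul_one, mul_inv_cancel]

theorem A2_inv_mul_A3_inv : A2⁻¹ * A3⁻¹ = A3 * A2 := by
  rw [← mul_inv_rev, inv_eq_iff_mul_eq_one, A3_mul_A2_mul_self]

theorem A2_pow_four : A2 ^ 4 = 1 := by
  have hsq : A2 ^ 2 = pairOm A1 (A3 * A2) := by
    conv_lhs => rw [pow_two, A2_eq_pairOm]
    rw [pairOm_mul_A1_mul_pairOm_mul_A1, A3_inv_mul_A2_inv, A2_inv_mul_A3_inv, A2_mul_A3]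
  rw [show 4 = 2 * 2 from rfl, pow_mul, hsq, pow_two, pairOm_mul, A1_mul_self,
    A3_mul_A2_mul_self, pairOm_one]

theorem A3_pow_four : A3 ^ 4 = 1 := by
  apply eq_one_of_eq_pairOm_one
  conv_lhs => rw [A3_eq_pairOm]
  rw [pairOm_pow, A2_pow_four]

def gamma1 : OmegaSG := A2 * A3⁻¹

def gamma2 : OmegaSG := A3⁻¹ * A2

theorem gamma1_eq_pairOm : gamma1 = pairOm (A3⁻¹ * A3⁻¹) (A2⁻¹ * A2⁻¹) * A1 :=
  omegaSG_ext <| by rintro (_ | ⟨(_ | _), w⟩) <;> rfl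

theorem gamma2_eq_pairOm : gamma2 = pairOm (A2⁻¹ * A3⁻¹) (A3⁻¹ * A2⁻¹) * A1 :=
  omegaSG_ext <| by rintro (_ | ⟨(_ | _), w⟩) <;> rfl

theorem gamma1_mul_gamma2 : gamma1 * gamma2 = pairOm (A3 * A2⁻¹) (A2 * A3⁻¹) := by
  rw [gamma1_eq_pairOm, gamma2_eq_pairOm, pairOm_mul_A1_mul_pairOm_mul_A1,
    show A3⁻¹ * A3⁻¹ * (A3⁻¹ * A2⁻¹) = (A3 ^ 3)⁻¹ * A2⁻¹ by group,
    show A2⁻¹ * A2⁻¹ * (A2⁻¹ * A3⁻¹) = (A2 ^ 3)⁻¹ * A3⁻¹ by group,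
    pow_three_eq_inv_of_pow_four A3_pow_four, pow_three_eq_inv_of_pow_four A2_pow_four,
    inv_inv, inv_inv]

theorem gamma2_mul_gamma1 : gamma2 * gamma1 = pairOm (A3 * A2⁻¹) (A2 * A3⁻¹) := by
  rw [gamma1_eq_pairOm, gamma2_eq_pairOm, pairOm_mul_A1_mul_pairOm_mul_A1, A2_inv_mul_A3_inv,
    A3_inv_mul_A2_inv]
  congr 1 <;> group

theorem commute_gamma1_gamma2 : gamma1 * gamma2 = gamma2 * gamma1 := by
  rw [gamma1_mul_gamma2, gamma2_mul_gamma1]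

theorem A1_conj_gamma1 : A1 * gamma1 * A1⁻¹ = gamma1⁻¹ := by
  rw [gamma1, A2_eq_A1_mul_A3_inv]
  calc A1 * (A1 * A3⁻¹ * A3⁻¹) * A1⁻¹ = A1 * A1 * A3⁻¹ ^ 2 * A1⁻¹ := by group
    _ = A3 ^ 2 * A1⁻¹ := by rw [A1_mul_self, one_mul, inv_sq_eq_sq_of_pow_four A3_pow_four]
    _ = (A1 * A3⁻¹ * A3⁻¹)⁻¹ := by group

theorem A1_conj_gamma2 : A1 * gamma2 * A1⁻¹ = gamma2⁻¹ := by
  rw [gamma2, ← A2_mul_A3]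
  calc A2 * A3 * (A3⁻¹ * A2) * (A2 * A3)⁻¹ = A2 * A2 * (A3⁻¹ * A2⁻¹) := by group
    _ = A2 ^ 3 * A3 := by rw [A3_inv_mul_A2_inv, pow_three]; simp only [mul_assoc]
    _ = (A3⁻¹ * A2)⁻¹ := by rw [pow_three_eq_inv_of_pow_four A2_pow_four]; group

theorem A3_conj_gamma1 : A3 * gamma1 * A3⁻¹ = gamma2⁻¹ := by
  rw [gamma1, gamma2, A2_eq_A1_mul_A3_inv]
  calc A3 * (A1 * A3⁻¹ * A3⁻¹) * A3⁻¹ = A3 * A1 * (A3 ^ 3)⁻¹ := by group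
    _ = A3 * A1⁻¹ * A3 := by rw [pow_three_eq_inv_of_pow_four A3_pow_four, inv_inv, A1_inv]
    _ = (A3⁻¹ * (A1 * A3⁻¹))⁻¹ := by group

theorem A3_conj_gamma2 : A3 * gamma2 * A3⁻¹ = gamma1 := by
  rw [gamma1, gamma2]; group

theorem commutatorElement_A1_A3 : ⁅A1, A3⁆ = pairOm gamma1⁻¹ gamma1 :=
  omegaSG_ext <| by rintro (_ | ⟨(_ | _), w⟩) <;> rfl

theorem commutatorElement_A3_inv_A1 : ⁅A3⁻¹, A1⁆ = pairOm gamma2⁻¹ gamma2 :=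
  omegaSG_ext <| by rintro (_ | ⟨(_ | _), w⟩) <;> rfl

section Topology

open Topology

theorem isEmbedding_coe_perm : IsEmbedding fun g : Perm Wd => (g : Wd → Wd) :=
  ⟨⟨rfl⟩, DFunLike.coe_injective⟩

instance : T2Space (Perm Wd) := isEmbedding_coe_perm.t2Space

theorem continuous_coe_apply (w : Wd) : Continuous fun g : OmegaSG => (g : Perm Wd) w :=
  (continuous_permApply w).comp continuous_subtype_val

theorem continuous_pairOm : Continuous fun p : OmegaSG × OmegaSG => pairOm p.1 p.2 := by
  refine Continuous.subtype_mk (continuous_induced_rng.2 (continuous_pi ?_)) _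
  rintro (_ | ⟨(_ | _), w⟩)
  · exact continuous_const
  · exact continuous_of_discreteTopology.comp ((continuous_coe_apply w).comp continuous_fst)
  · exact continuous_of_discreteTopology.comp ((continuous_coe_apply w).comp continuous_snd)

theorem range_coe_omegaSG : Set.range (fun g : OmegaSG => ((g : Perm Wd) : Wd → Wd)) =
    {f | (∀ w, (f w).length = w.length) ∧ (∀ w, (f w).dropLast = f w.dropLast) ∧
      Function.Injective f} := by
  refine Set.Subset.antisymm ?_ fun f ⟨hlen, hdrop, hinj⟩ => ?_
  · rintro _ ⟨g, rfl⟩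
    exact ⟨g.2.1, g.2.2, (g : Perm Wd).injective⟩
  have hsurj : Function.Surjective f := fun v => by
    let fv : Lv v.length → Lv v.length := fun w => ⟨f w, (hlen w).trans w.2⟩
    obtain ⟨w, hw⟩ := Finite.injective_iff_surjective.1
      (fun a b hab => Subtype.ext (hinj (congrArg Subtype.val hab)) : fv.Injective) ⟨v, rfl⟩
    exact ⟨w, congrArg Subtype.val hw⟩
  exact ⟨⟨Equiv.ofBijective f ⟨hinj, hsurj⟩, hlen, hdrop⟩, rfl⟩

theorem isCompact_range_coe_omegaSG :
    IsCompact (Set.range fun g : OmegaSG => ((g : Perm Wd) : Wd → Wd)) := by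
  rw [range_coe_omegaSG]
  have hlen : IsCompact {f : Wd → Wd | ∀ w, (f w).length = w.length} := by
    simpa [Set.pi] using
      isCompact_univ_pi fun w : Wd => (List.finite_length_eq Bool w.length).isCompact
  have hdrop : IsClosed {f : Wd → Wd | ∀ w, (f w).dropLast = f w.dropLast} := by
    rw [Set.ofPred_forall]
    exact isClosed_iInter fun w => isClosed_eq
      (continuous_of_discreteTopology.comp (continuous_apply w)) (continuous_apply _)
  have hinj : IsClosed {f : Wd → Wd | Function.Injective f} := by
    simp only [Function.Injective, Set.ofPred_forall]
    exact isClosed_iInter fun a => isClosed_iInter fun b =>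
      (isClosed_discrete {p : Wd × Wd | p.1 = p.2 → a = b}).preimage
        (((continuous_apply a).prodMk (continuous_apply b) :
          Continuous fun f : Wd → Wd => (f a, f b)))
  exact hlen.inter_right (hdrop.inter hinj)

instance : CompactSpace OmegaSG := by
  rw [← isCompact_univ_iff,
    (isEmbedding_coe_perm.isInducing.comp IsInducing.subtypeVal).isCompact_iff, Set.image_univ]
  exact isCompact_range_coe_omegaSG

end Topology

open Subgroup

theorem A1_mem_Ggrp : A1 ∈ Ggrp := le_topologicalClosure _ (subset_closure (by simp))

theorem A3_mem_Ggrp : A3 ∈ Ggrp := le_topologicalClosure _ (subset_closure (by simp))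

theorem A2_mem_Ggrp : A2 ∈ Ggrp :=
  A2_eq_A1_mul_A3_inv ▸ mul_mem A1_mem_Ggrp (inv_mem A3_mem_Ggrp)

theorem Ggrp_le {K : Subgroup OmegaSG} (hK : IsClosed (K : Set OmegaSG)) (h1 : A1 ∈ K)
    (h3 : A3 ∈ K) : Ggrp ≤ K :=
  topologicalClosure_minimal _
    ((closure_le K).2 (Set.insert_subset h1 (Set.singleton_subset_iff.2 h3))) hK

theorem Ggrp_le_normalizer {K : Subgroup OmegaSG} (hK : IsClosed (K : Set OmegaSG))
    (h1 : ∀ x ∈ K, A1 * x * A1⁻¹ ∈ K) (h3 : ∀ x ∈ K, A3 * x * A3⁻¹ ∈ K) :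
    Ggrp ≤ normalizer (K : Set OmegaSG) :=
  Ggrp_le (isClosed_normalizer hK)
    (mem_normalizer_of_isOfFinOrder (isOfFinOrder_iff_pow_eq_one.2
      ⟨2, two_pos, by rw [pow_two, A1_mul_self]⟩) h1)
    (mem_normalizer_of_isOfFinOrder (isOfFinOrder_iff_pow_eq_one.2
      ⟨4, four_pos, A3_pow_four⟩) h3)

theorem isClosed_nclG (c : OmegaSG) : IsClosed (nclG c : Set OmegaSG) :=
  isClosed_topologicalClosure _

theorem conj_mem_nclG (c : OmegaSG) {g : OmegaSG} (hg : g ∈ Ggrp) : g * c * g⁻¹ ∈ nclG c :=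
  le_topologicalClosure _ (subset_closure ⟨g, hg, rfl⟩)

theorem mem_nclG_self (c : OmegaSG) : c ∈ nclG c := by
  simpa using conj_mem_nclG c (one_mem Ggrp)

theorem nclG_le {c : OmegaSG} {K : Subgroup OmegaSG} (hK : IsClosed (K : Set OmegaSG))
    (h : ∀ g ∈ Ggrp, g * c * g⁻¹ ∈ K) : nclG c ≤ K :=
  topologicalClosure_minimal _ ((closure_le K).2 (by rintro _ ⟨g, hg, rfl⟩; exact h g hg)) hK

theorem Ggrp_le_normalizer_nclG (c : OmegaSG) : Ggrp ≤ normalizer (nclG c : Set OmegaSG) :=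
  le_normalizer_topologicalClosure_closure fun g hg _ ⟨h, hh, hs⟩ =>
    ⟨g * h, mul_mem hg hh, by rw [hs]; group⟩

theorem nclG_le_of_mem {c : OmegaSG} {K : Subgroup OmegaSG} (hK : IsClosed (K : Set OmegaSG))
    (hG : Ggrp ≤ normalizer (K : Set OmegaSG)) (hc : c ∈ K) : nclG c ≤ K :=
  nclG_le hK fun _ hg => (mem_normalizer_iff.1 (hG hg) c).1 hc

/-- The closure `N` of the commutator subgroup of `G`. -/
noncomputable def commG : Subgroup OmegaSG := nclG ⁅A1, A3⁆

theorem commutatorElement_mem_commG {g h : OmegaSG} (hg : g ∈ Ggrp) (hh : h ∈ Ggrp) :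
    ⁅g, h⁆ ∈ commG :=
  commutatorElement_mem_of_mem_topologicalClosure_closure_pair (isClosed_nclG _)
    (Ggrp_le_normalizer_nclG _ A1_mem_Ggrp) (Ggrp_le_normalizer_nclG _ A3_mem_Ggrp)
    (mem_nclG_self _) hg hh

noncomputable def sgnOneHom : OmegaSG →* ℤˣ := Perm.sign.comp (levelHom 1)

theorem isClosed_setOf_levelHom_eq (n : ℕ) (p : Perm (Lv n)) :
    IsClosed {g : OmegaSG | levelHom n g = p} := by
  have : {g : OmegaSG | levelHom n g = p} =
      ⋂ w : Lv n, {g : OmegaSG | (g : Perm Wd) w.1 = (p w).1} := by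
    ext g
    simp [Equiv.ext_iff, Subtype.ext_iff, levelHom, levelPerm]
  rw [this]
  exact isClosed_iInter fun w => isClosed_eq (continuous_coe_apply w.1) continuous_const

theorem isClosed_ker_sgnOneHom : IsClosed (sgnOneHom.ker : Set OmegaSG) := by
  have : (sgnOneHom.ker : Set OmegaSG) =
      ⋃ p ∈ {p : Perm (Lv 1) | Perm.sign p = 1}, {g | levelHom 1 g = p} := by
    ext g
    simp [sgnOneHom]
  rw [this]
  exact (Set.toFinite _).isClosed_biUnion fun p _ => isClosed_setOf_levelHom_eq 1 p

theorem lv_one_cases (w : Lv 1) : w = ⟨[false], rfl⟩ ∨ w = ⟨[true], rfl⟩ := by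
  obtain ⟨_ | ⟨b, _ | ⟨c, w⟩⟩, hw⟩ := w
  · simp at hw
  · cases b <;> simp
  · simp at hw

theorem sgnOneHom_A1 : sgnOneHom A1 = -1 := by
  have : levelHom 1 A1 = swap ⟨[false], rfl⟩ ⟨[true], rfl⟩ :=
    Equiv.ext fun w => by rcases lv_one_cases w with rfl | rfl <;> rfl
  rw [sgnOneHom, MonoidHom.comp_apply, this, Perm.sign_swap (by simp)]

theorem sgnOneHom_A3 : sgnOneHom A3 = 1 := by
  have : levelHom 1 A3 = 1 :=
    Equiv.ext fun w => by rcases lv_one_cases w with rfl | rfl <;> rfl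
  rw [sgnOneHom, MonoidHom.comp_apply, this, map_one]

theorem Ggrp_le_normalizer_ker_sgnOneHom : Ggrp ≤ normalizer (sgnOneHom.ker : Set OmegaSG) := by
  rw [normalizer_eq_top]
  exact le_top

theorem H3grp_le_ker_sgnOneHom : H3grp ≤ sgnOneHom.ker :=
  nclG_le_of_mem isClosed_ker_sgnOneHom Ggrp_le_normalizer_ker_sgnOneHom sgnOneHom_A3

theorem commG_le_ker_sgnOneHom : commG ≤ sgnOneHom.ker :=
  nclG_le_of_mem isClosed_ker_sgnOneHom Ggrp_le_normalizer_ker_sgnOneHom <| by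
    simp [MonoidHom.mem_ker, map_commutatorElement, commutatorElement_eq_one_iff_mul_comm,
      mul_comm]

theorem H1grp_le_unionCoset_commG :
    H1grp ≤ unionCoset commG (Ggrp_le_normalizer_nclG _ A1_mem_Ggrp)
      (by rw [A1_mul_self]; exact one_mem _) :=
  nclG_le (isClosed_unionCoset (isClosed_nclG _) _ _) fun g hg => Or.inr <| by
    rw [show A1 * (g * A1 * g⁻¹) = ⁅A1, g⁆ by rw [commutatorElement_def, A1_inv]; group]
    exact commutatorElement_mem_commG A1_mem_Ggrp hg

theorem H1grp_inf_H3grp_le_commG : H1grp ⊓ H3grp ≤ commG := by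
  refine fun x ⟨hx1, hx3⟩ => (H1grp_le_unionCoset_commG hx1).resolve_right fun hx => ?_
  have h := commG_le_ker_sgnOneHom hx
  rw [MonoidHom.mem_ker, map_mul, H3grp_le_ker_sgnOneHom hx3, mul_one, sgnOneHom_A1] at h
  exact absurd h (by decide)

theorem commG_le_H1grp : commG ≤ H1grp := by
  refine nclG_le_of_mem (isClosed_nclG _) (Ggrp_le_normalizer_nclG _) ?_
  rw [commutatorElement_def, mul_assoc, mul_assoc, ← mul_assoc A3, A1_inv]
  exact mul_mem (mem_nclG_self A1) (conj_mem_nclG A1 A3_mem_Ggrp)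

theorem commG_le_H3grp : commG ≤ H3grp := by
  refine nclG_le_of_mem (isClosed_nclG _) (Ggrp_le_normalizer_nclG _) ?_
  rw [commutatorElement_def]
  exact mul_mem (conj_mem_nclG A3 A1_mem_Ggrp) (inv_mem (mem_nclG_self A3))

theorem H1grp_inf_H3grp_eq_commG : H1grp ⊓ H3grp = commG :=
  le_antisymm H1grp_inf_H3grp_le_commG (le_inf commG_le_H1grp commG_le_H3grp)

def gammaSubgroup : Subgroup OmegaSG := Subgroup.closure {gamma1, gamma2}

theorem gamma1_mem_gammaSubgroup : gamma1 ∈ gammaSubgroup := subset_closure (by simp)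

theorem gamma2_mem_gammaSubgroup : gamma2 ∈ gammaSubgroup := subset_closure (by simp)

theorem gamma1_mem_Ugrp : gamma1 ∈ Ugrp := mem_nclG_self _

theorem gamma2_mem_Ugrp : gamma2 ∈ Ugrp := by
  show A3⁻¹ * A2 ∈ nclG (A2 * A3⁻¹)
  simpa [mul_assoc] using conj_mem_nclG (A2 * A3⁻¹) (inv_mem A3_mem_Ggrp)

theorem Ugrp_eq_topologicalClosure_gammaSubgroup : Ugrp = gammaSubgroup.topologicalClosure := by
  have hconj : ∀ c, c * gamma1 * c⁻¹ ∈ gammaSubgroup → c * gamma2 * c⁻¹ ∈ gammaSubgroup →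
      ∀ x ∈ gammaSubgroup.topologicalClosure, c * x * c⁻¹ ∈ gammaSubgroup.topologicalClosure :=
    fun c h1 h2 _ =>
      conj_mem_topologicalClosure_closure (by simpa [Set.forall_mem_insert] using ⟨h1, h2⟩)
  refine le_antisymm (nclG_le_of_mem (isClosed_topologicalClosure _)
    (Ggrp_le_normalizer (isClosed_topologicalClosure _) ?_ ?_)
      (le_topologicalClosure _ gamma1_mem_gammaSubgroup))
    (topologicalClosure_minimal _ ((closure_le _).2 (Set.insert_subset gamma1_mem_Ugrp
      (Set.singleton_subset_iff.2 gamma2_mem_Ugrp))) (isClosed_nclG _))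
  · exact hconj A1 (A1_conj_gamma1 ▸ inv_mem gamma1_mem_gammaSubgroup)
      (A1_conj_gamma2 ▸ inv_mem gamma2_mem_gammaSubgroup)
  · exact hconj A3 (A3_conj_gamma1 ▸ inv_mem gamma2_mem_gammaSubgroup)
      (A3_conj_gamma2 ▸ gamma1_mem_gammaSubgroup)

theorem Ugrp_mul_comm {x y : OmegaSG} (hx : x ∈ Ugrp) (hy : y ∈ Ugrp) : x * y = y * x := by
  have hcomm := isMulCommutative_closure (k := {gamma1, gamma2}) (by simp [commute_gamma1_gamma2])
  let _ := gammaSubgroup.commGroupTopologicalClosure fun a b => hcomm.is_comm.comm a b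
  rw [Ugrp_eq_topologicalClosure_gammaSubgroup] at hx hy
  exact congrArg Subtype.val (mul_comm (⟨x, hx⟩ : gammaSubgroup.topologicalClosure) ⟨y, hy⟩)

theorem A3_conj_eq_A2_conj {y : OmegaSG} (hy : y ∈ Ugrp) : A3 * y * A3⁻¹ = A2 * y * A2⁻¹ := by
  calc A3 * y * A3⁻¹ = A2 * (gamma2⁻¹ * (y * gamma2)) * A2⁻¹ := by rw [gamma2]; group
    _ = A2 * y * A2⁻¹ := by rw [← Ugrp_mul_comm gamma2_mem_Ugrp hy, inv_mul_cancel_left]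

theorem A3_mul_pairOm_mul_A3_inv (a b : OmegaSG) :
    A3 * pairOm a b * A3⁻¹ = pairOm (A2 * a * A2⁻¹) (A3 * b * A3⁻¹) := by
  calc A3 * pairOm a b * A3⁻¹ = pairOm A2 A3 * pairOm a b * pairOm A2⁻¹ A3⁻¹ := by
        rw [← A3_eq_pairOm, ← A3_inv_eq_pairOm]
    _ = pairOm (A2 * a * A2⁻¹) (A3 * b * A3⁻¹) := by rw [pairOm_mul, pairOm_mul]

noncomputable def antidiagHom : Ugrp →* OmegaSG where
  toFun y := pairOm (y : OmegaSG)⁻¹ y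
  map_one' := by rw [OneMemClass.coe_one, inv_one, pairOm_one]
  map_mul' y z := by
    rw [pairOm_mul, Subgroup.coe_mul, mul_inv_rev, Ugrp_mul_comm (inv_mem z.2) (inv_mem y.2)]

theorem antidiagHom_apply (y : Ugrp) : antidiagHom y = pairOm (y : OmegaSG)⁻¹ y := rfl

theorem antidiagHom_injective : Function.Injective antidiagHom :=
  fun _ _ h => Subtype.ext (pairOm_inj.1 h).2

theorem mem_range_antidiagHom {g : OmegaSG} :
    g ∈ antidiagHom.range ↔ ∃ x ∈ Ugrp, g = pairOm x x⁻¹ := by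
  refine ⟨fun ⟨y, hy⟩ => ⟨(y : OmegaSG)⁻¹, inv_mem y.2, ?_⟩,
    fun ⟨x, hx, hg⟩ => ⟨⟨x⁻¹, inv_mem hx⟩, ?_⟩⟩
  · rw [← hy, antidiagHom_apply, inv_inv]
  · rw [hg, antidiagHom_apply, inv_inv]

theorem continuous_antidiag : Continuous fun x : OmegaSG => pairOm x⁻¹ x :=
  continuous_pairOm.comp (continuous_inv.prodMk continuous_id)

theorem isClosed_range_antidiagHom : IsClosed (antidiagHom.range : Set OmegaSG) := by
  have : CompactSpace Ugrp := isCompact_iff_compactSpace.1 (isClosed_nclG _).isCompact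
  rw [MonoidHom.coe_range]
  exact (isCompact_range (continuous_antidiag.comp continuous_subtype_val)).isClosed

theorem commG_le_range_antidiagHom : commG ≤ antidiagHom.range := by
  refine nclG_le_of_mem isClosed_range_antidiagHom
    (Ggrp_le_normalizer isClosed_range_antidiagHom ?_ ?_)
    ⟨⟨gamma1, gamma1_mem_Ugrp⟩, commutatorElement_A1_A3.symm⟩
  · rintro _ ⟨y, rfl⟩
    refine ⟨y⁻¹, ?_⟩
    rw [A1_inv, antidiagHom_apply, antidiagHom_apply, A1_mul_pairOm_mul_A1, InvMemClass.coe_inv,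
      inv_inv]
  · rintro _ ⟨y, rfl⟩
    have hA2y : A2 * y * A2⁻¹ ∈ Ugrp :=
      (mem_normalizer_iff.1 (Ggrp_le_normalizer_nclG _ A2_mem_Ggrp) y).1 y.2
    refine ⟨⟨A2 * y * A2⁻¹, hA2y⟩, ?_⟩
    rw [antidiagHom_apply, antidiagHom_apply, A3_mul_pairOm_mul_A3_inv, A3_conj_eq_A2_conj y.2]
    simp only [mul_inv_rev, inv_inv, mul_assoc]

theorem range_antidiagHom_le_commG : antidiagHom.range ≤ commG := by
  let T : Subgroup OmegaSG := (commG.comap antidiagHom).map Ugrp.subtype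
  have hT : (T : Set OmegaSG) = (Ugrp : Set OmegaSG) ∩ (fun x => pairOm x⁻¹ x) ⁻¹' commG := by
    ext x
    simp [T, antidiagHom_apply, and_comm]
  have hTc : IsClosed (T : Set OmegaSG) :=
    hT ▸ (isClosed_nclG _).inter ((isClosed_nclG _).preimage continuous_antidiag)
  have hUT : gammaSubgroup.topologicalClosure ≤ T := by
    refine topologicalClosure_minimal _ ((closure_le T).2 ?_) hTc
    rw [hT, Set.insert_subset_iff, Set.singleton_subset_iff]
    refine ⟨⟨gamma1_mem_Ugrp, ?_⟩, gamma2_mem_Ugrp, ?_⟩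
    · show pairOm gamma1⁻¹ gamma1 ∈ commG
      rw [← commutatorElement_A1_A3]
      exact mem_nclG_self _
    · show pairOm gamma2⁻¹ gamma2 ∈ commG
      rw [← commutatorElement_A3_inv_A1]
      exact commutatorElement_mem_commG (inv_mem A3_mem_Ggrp) A1_mem_Ggrp
  rintro _ ⟨y, rfl⟩
  have hy : (y : OmegaSG) ∈ (T : Set OmegaSG) :=
    hUT (Ugrp_eq_topologicalClosure_gammaSubgroup ▸ y.2)
  rw [hT] at hy
  exact hy.2

/-- `H₁ ∩ H₃ = {(x, x⁻¹) : x ∈ U}`, and projection to the second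
coordinate gives an isomorphism `H₁ ∩ H₃ ≅ U`. -/
theorem stmt9 :
    (∀ g : OmegaSG, g ∈ H1grp ⊓ H3grp ↔ ∃ x ∈ Ugrp, g = pairOm x x⁻¹) ∧
    ∃ e : ↥(H1grp ⊓ H3grp) ≃* ↥Ugrp,
      ∀ (h : ↥(H1grp ⊓ H3grp)) (x : OmegaSG),
        (h : OmegaSG) = pairOm x x⁻¹ → ((e h : ↥Ugrp) : OmegaSG) = x⁻¹ := by
  have hV : H1grp ⊓ H3grp = antidiagHom.range := H1grp_inf_H3grp_eq_commG.trans
    (le_antisymm commG_le_range_antidiagHom range_antidiagHom_le_commG)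
  let e := (MulEquiv.subgroupCongr hV).trans (MonoidHom.ofInjective antidiagHom_injective).symm
  refine ⟨fun g => hV ▸ mem_range_antidiagHom, e, fun h x hx => ?_⟩
  have he : antidiagHom (e h) = h :=
    congrArg Subtype.val ((MonoidHom.ofInjective antidiagHom_injective).apply_symm_apply _)
  exact (pairOm_inj.1 (he.trans hx)).2
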